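/- If {φ_j}_{j=1}^n is a flat ETF for F^d with 1 < d < n−1, then n ≤ d² − d + 1 when F = C, and n ≤ d(d−1)/2 + 1 when F = R. Moreover, if the ETF is (complex) Hadamard then additionally n ≤ (n−d)² − (n−d) + 1 (complex case) and n ≤ (n−d)(n−d−1)/2 + 1 (real case), i.e., d + √d + 1 ≤ n (complex) and d + sqrt(2d + 1/4) + 3/2 ≤ n (real). -/

import Mathlib

/-!
For a tight frame `Φ Φᴴ = α • 1` the Gram matrix `G = Φᴴ Φ` satisfies `G² = α G`. Comparing a
diagonal entry of this identity with the trace shows that an equal-norm equiangular tight frame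
with `d, n > 1` has `γ² < a²`, where `a = ‖φ_j‖²` and `γ = |⟨φ_j, φ_j'⟩|`. If `∑ c_j φ_j φ_jᴴ = 0`,
the trace gives `∑ c_j = 0` and the quadratic form at `φ_k` gives `c_k (a² − γ²) = 0`, so the
outer products are linearly independent over `ℝ`. For a flat frame they are Hermitian with
constant diagonal, and such matrices form a real space of dimension at most
`dim_ℝ 𝕜 · C(d, 2) + 1`.

For a Hadamard ETF the other `n − d` rows of the Hadamard matrix form a flat tight frame whose
Gram matrix is `n • 1 − G`, so it is equiangular with the same `γ` and the same bound applies.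
-/

open Matrix Module Function

namespace Matrix

variable {𝕜 m ι : Type*} [RCLike 𝕜]

variable (𝕜 m) in
def hermitianConstDiag : Submodule ℝ (Matrix m m 𝕜) where
  carrier := {M | M.IsHermitian ∧ ∀ i j, M i i = M j j}
  add_mem' hM hN := ⟨hM.1.add hN.1, fun i j => by simp [hM.2 i j, hN.2 i j]⟩
  zero_mem' := ⟨isHermitian_zero, fun _ _ => rfl⟩
  smul_mem' c _ hM := ⟨hM.1.smul (IsSelfAdjoint.all c), fun i j => by simp [hM.2 i j]⟩

theorem sum_smul_vecMulVec_col [Fintype ι] [DecidableEq ι] (Φ : Matrix m ι 𝕜) (c : ι → ℝ) :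
    ∑ j, c j • vecMulVec (Φᵀ j) (star (Φᵀ j)) = Φ * diagonal (fun j => (c j : 𝕜)) * Φᴴ := by
  ext i i'
  rw [mul_apply]
  simp only [sum_apply, smul_apply, vecMulVec_apply, mul_diagonal, transpose_apply,
    Pi.star_apply, conjTranspose_apply, RCLike.real_smul_eq_coe_mul]
  exact Finset.sum_congr rfl fun j _ => by ring

section

variable [Fintype m]

theorem finrank_hermitianConstDiag_le [LinearOrder m] :
    finrank ℝ (hermitianConstDiag 𝕜 m) ≤ finrank ℝ 𝕜 * (Fintype.card m).choose 2 + 1 := by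
  -- a Hermitian matrix with constant diagonal is determined by its strict upper triangle and trace
  let L : hermitianConstDiag 𝕜 m →ₗ[ℝ] ({p : m × m // p.1 < p.2} → 𝕜) × ℝ :=
    { toFun M := (fun p => (M : Matrix m m 𝕜) p.1.1 p.1.2, RCLike.re (M : Matrix m m 𝕜).trace)
      map_add' M N := by ext <;> simp
      map_smul' c M := by ext <;> simp [RCLike.smul_re] }
  have hL : Injective L := by
    rw [← LinearMap.ker_eq_bot, LinearMap.ker_eq_bot']
    rintro ⟨M, hherm, hconst⟩ hM
    simp only [L, LinearMap.coe_mk, AddHom.coe_mk, Prod.mk_eq_zero, funext_iff] at hM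
    have hupper : ∀ i j, i < j → M i j = 0 := fun i j hij => hM.1 ⟨(i, j), hij⟩
    have hdiag : ∀ i, M i i = 0 := by
      intro i
      have hre : RCLike.re M.trace = Fintype.card m * RCLike.re (M i i) := by
        simp [trace, fun j => hconst j i]
      have hreal : (RCLike.re (M i i) : 𝕜) = M i i := RCLike.conj_eq_iff_re.mp (hherm.apply i i)
      have hpos : (0 : ℝ) < Fintype.card m := by exact_mod_cast Fintype.card_pos_iff.mpr ⟨i⟩
      have hzero : Fintype.card m * RCLike.re (M i i) = 0 := hre ▸ hM.2
      rw [← hreal, (mul_eq_zero.mp hzero).resolve_left hpos.ne', RCLike.ofReal_zero]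
    refine Subtype.ext (Matrix.ext fun i j => ?_)
    show M i j = 0
    rcases lt_trichotomy i j with hij | rfl | hij
    · exact hupper i j hij
    · exact hdiag i
    · rw [← hherm.apply, hupper j i hij, star_zero]
  calc finrank ℝ (hermitianConstDiag 𝕜 m)
      ≤ finrank ℝ (({p : m × m // p.1 < p.2} → 𝕜) × ℝ) :=
        LinearMap.finrank_le_finrank_of_injective hL
    _ = finrank ℝ 𝕜 * (Fintype.card m).choose 2 + 1 := by
      rw [finrank_prod, finrank_pi_fintype, finrank_self, Finset.sum_const, Finset.card_univ,
        Fintype.card_subtype, Fintype.card_product_filter_lt, smul_eq_mul, mul_comm]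

theorem conjTranspose_mul_self_apply (Φ : Matrix m ι 𝕜) (j j' : ι) :
    (Φᴴ * Φ) j j' = ∑ i, star (Φ i j) * Φ i j' := by
  simp [mul_apply]

theorem conjTranspose_mul_self_apply_self_of_flat {Φ : Matrix m ι 𝕜}
    (hflat : ∀ i j, ‖Φ i j‖ = 1) (j : ι) : (Φᴴ * Φ) j j = Fintype.card m := by
  simp [conjTranspose_mul_self_apply, RCLike.conj_mul, hflat]

theorem conjTranspose_mul_self_submatrix_sum {κ m' : Type*} [Fintype κ] [Fintype m']
    (H : Matrix κ ι 𝕜) (e : m ⊕ m' ≃ κ) :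
    (H.submatrix (e ∘ Sum.inl) id)ᴴ * H.submatrix (e ∘ Sum.inl) id +
      (H.submatrix (e ∘ Sum.inr) id)ᴴ * H.submatrix (e ∘ Sum.inr) id = Hᴴ * H := by
  ext j j'
  simp only [add_apply, conjTranspose_mul_self_apply, submatrix_apply, Function.comp_apply, id_eq]
  rw [← Fintype.sum_sum_type (f := fun x => star (H (e x) j) * H (e x) j'),
    e.sum_comp (fun k => star (H k j) * H k j')]

variable [Fintype ι]

theorem gram_mul_diagonal_mul_gram_apply_self [DecidableEq ι] (Φ : Matrix m ι 𝕜) (c : ι → ℝ)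
    (k : ι) :
    (Φᴴ * Φ * diagonal (fun j => (c j : 𝕜)) * (Φᴴ * Φ)) k k =
      ((∑ j, c j * ‖(Φᴴ * Φ) k j‖ ^ 2 : ℝ) : 𝕜) := by
  have hG := (isHermitian_conjTranspose_mul_self Φ).apply
  rw [mul_apply]
  simp only [mul_diagonal]
  push_cast
  refine Finset.sum_congr rfl fun j _ => ?_
  rw [← hG k j, RCLike.star_def, mul_right_comm, RCLike.conj_mul, RCLike.norm_conj, mul_comm]

section Equiangular

variable {Φ : Matrix m ι 𝕜} {a γ : ℝ} (hdiag : ∀ j, (Φᴴ * Φ) j j = a)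
  (hoff : ∀ j j', j ≠ j' → ‖(Φᴴ * Φ) j j'‖ = γ)
include hdiag hoff

theorem sum_mul_norm_sq_gram_of_equiangular (c : ι → ℝ) (k : ι) :
    ∑ j, c j * ‖(Φᴴ * Φ) k j‖ ^ 2 = γ ^ 2 * ∑ j, c j + c k * (a ^ 2 - γ ^ 2) := by
  classical
  have hsq : ∀ j, ‖(Φᴴ * Φ) k j‖ ^ 2 = γ ^ 2 + if j = k then a ^ 2 - γ ^ 2 else 0 := by
    intro j
    split_ifs with hjk
    · rw [hjk, hdiag, RCLike.norm_ofReal, sq_abs]; ring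
    · rw [hoff k j (Ne.symm hjk), add_zero]
  simp only [hsq, mul_add, Finset.sum_add_distrib, mul_ite, mul_zero, Finset.sum_ite_eq',
    Finset.mem_univ, if_true, ← Finset.sum_mul]
  ring

theorem sq_lt_sq_of_tight_of_equiangular [DecidableEq m] {α : 𝕜} (hα : Φ * Φᴴ = α • 1)
    (ha : a ≠ 0) (hm : 1 < Fintype.card m) (hι : 1 < Fintype.card ι) : γ ^ 2 < a ^ 2 := by
  classical
  obtain ⟨k⟩ : Nonempty ι := Fintype.card_pos_iff.mp (by omega)
  have hgram_sq : Φᴴ * Φ * (Φᴴ * Φ) = α • (Φᴴ * Φ) := by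
    rw [Matrix.mul_assoc, ← Matrix.mul_assoc Φ, hα, smul_mul, Matrix.one_mul, Matrix.mul_smul]
  have hrow : α * a = ((γ ^ 2 * Fintype.card ι + (a ^ 2 - γ ^ 2) : ℝ) : 𝕜) := by
    have h := gram_mul_diagonal_mul_gram_apply_self Φ 1 k
    simp only [Pi.one_apply, RCLike.ofReal_one, diagonal_one, Matrix.mul_one, hgram_sq,
      smul_apply, hdiag, smul_eq_mul, sum_mul_norm_sq_gram_of_equiangular hdiag hoff] at h
    simpa using h
  have htrace : (Fintype.card ι : 𝕜) * a = α * Fintype.card m := by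
    have h := congrArg trace hα
    rw [trace_mul_comm, trace_smul, trace_one] at h
    simpa [trace, hdiag] using h
  have hreal : (Fintype.card m : ℝ) * (γ ^ 2 * Fintype.card ι + (a ^ 2 - γ ^ 2)) =
      Fintype.card ι * a ^ 2 := by
    apply RCLike.ofReal_injective (K := 𝕜)
    push_cast at hrow ⊢
    linear_combination -(Fintype.card m : 𝕜) * hrow - a * htrace
  have hm' : (1 : ℝ) < Fintype.card m := by exact_mod_cast hm
  have hι' : (1 : ℝ) < Fintype.card ι := by exact_mod_cast hι
  nlinarith [mul_pos (sub_pos.2 hm') (sub_pos.2 hι'), sq_pos_of_ne_zero ha]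

theorem linearIndependent_vecMulVec_of_equiangular (ha : a ≠ 0) (hγa : γ ^ 2 ≠ a ^ 2) :
    LinearIndependent ℝ fun j => vecMulVec (Φᵀ j) (star (Φᵀ j)) := by
  classical
  rw [Fintype.linearIndependent_iff]
  intro c hc k
  set D := diagonal fun j => (c j : 𝕜)
  have hzero : Φ * D * Φᴴ = 0 := by rw [← sum_smul_vecMulVec_col, hc]
  have hsum : ∑ j, c j = 0 := by
    have h := congrArg trace hzero
    rw [trace_mul_cycle, trace_zero] at h
    have h' : ((a * ∑ j, c j : ℝ) : 𝕜) = 0 := by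
      simpa [D, trace, diagonal_mul, hdiag, Finset.mul_sum, mul_comm] using h
    exact (mul_eq_zero.mp (RCLike.ofReal_eq_zero.mp h')).resolve_left ha
  have hk : ∑ j, c j * ‖(Φᴴ * Φ) k j‖ ^ 2 = 0 := by
    have h := congrArg (fun M => (Φᴴ * M * Φ) k k) hzero
    simp only [Matrix.mul_zero, Matrix.zero_mul, zero_apply] at h
    rw [← RCLike.ofReal_eq_zero (K := 𝕜), ← gram_mul_diagonal_mul_gram_apply_self, ← h]
    simp only [D, Matrix.mul_assoc]
  rw [sum_mul_norm_sq_gram_of_equiangular hdiag hoff, hsum, mul_zero, zero_add] at hk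
  exact (mul_eq_zero.mp hk).resolve_right (sub_ne_zero.mpr hγa.symm)

end Equiangular

theorem card_le_of_flat_etf [LinearOrder m] {Φ : Matrix m ι 𝕜} (hflat : ∀ i j, ‖Φ i j‖ = 1)
    {α : 𝕜} (hα : Φ * Φᴴ = α • 1) {γ : ℝ} (hγ : ∀ j j', j ≠ j' → ‖(Φᴴ * Φ) j j'‖ = γ)
    (hm : 1 < Fintype.card m) :
    Fintype.card ι ≤ finrank ℝ 𝕜 * (Fintype.card m).choose 2 + 1 := by
  rcases le_or_gt (Fintype.card ι) 1 with hι | hι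
  · omega
  have hdiag : ∀ j, (Φᴴ * Φ) j j = ((Fintype.card m : ℝ) : 𝕜) := by
    simpa using conjTranspose_mul_self_apply_self_of_flat hflat
  have hd : (Fintype.card m : ℝ) ≠ 0 := by positivity
  have hli := linearIndependent_vecMulVec_of_equiangular hdiag hγ hd
    (sq_lt_sq_of_tight_of_equiangular hdiag hγ hα hd hm hι).ne
  have hmem : ∀ j, vecMulVec (Φᵀ j) (star (Φᵀ j)) ∈ hermitianConstDiag 𝕜 m := fun j =>
    ⟨IsHermitian.ext fun i i' => by simp [vecMulVec_apply, mul_comm], fun i i' => by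
      simp [vecMulVec_apply, RCLike.mul_conj, hflat]⟩
  calc Fintype.card ι = finrank ℝ (Submodule.span ℝ (Set.range _)) :=
        (finrank_span_eq_card hli).symm
    _ ≤ finrank ℝ (hermitianConstDiag 𝕜 m) :=
      Submodule.finrank_mono (Submodule.span_le.mpr (Set.range_subset_iff.mpr hmem))
    _ ≤ _ := finrank_hermitianConstDiag_le

theorem conjTranspose_mul_self_eq_smul_one {κ : Type*} [Fintype κ] [DecidableEq κ]
    {H : Matrix κ κ 𝕜} {c : 𝕜} (hc : c ≠ 0) (hH : H * Hᴴ = c • 1) : Hᴴ * H = c • 1 := by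
  have hinv : H * (c⁻¹ • Hᴴ) = 1 := by
    rw [Matrix.mul_smul, hH, smul_smul, inv_mul_cancel₀ hc, one_smul]
  rw [← (inv_smul_eq_iff₀ hc), ← Matrix.smul_mul]
  exact mul_eq_one_comm.mp hinv

theorem card_le_of_hadamard_etf {κ : Type*} [Fintype κ] [LinearOrder κ] {H : Matrix κ κ 𝕜}
    (hflat : ∀ i j, ‖H i j‖ = 1) (hH : H * Hᴴ = (Fintype.card κ : 𝕜) • 1) {f : m → κ}
    (hf : Injective f) {γ : ℝ}
    (hγ : ∀ j j', j ≠ j' → ‖((H.submatrix f id)ᴴ * H.submatrix f id) j j'‖ = γ)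
    (hm : 1 < Fintype.card κ - Fintype.card m) :
    Fintype.card κ ≤ finrank ℝ 𝕜 * (Fintype.card κ - Fintype.card m).choose 2 + 1 := by
  classical
  let e : m ⊕ {k // k ∉ Set.range f} ≃ κ :=
    ((Equiv.ofInjective f hf).sumCongr (Equiv.refl _)).trans (Equiv.sumCompl _)
  let Ψ := H.submatrix (e ∘ Sum.inr) id
  have hcard : Fintype.card {k // k ∉ Set.range f} = Fintype.card κ - Fintype.card m := by
    have := Fintype.card_congr e
    rw [Fintype.card_sum] at this
    omega
  have hn : (Fintype.card κ : 𝕜) ≠ 0 := Nat.cast_ne_zero.mpr (by omega)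
  have hΨ_tight : Ψ * Ψᴴ = (Fintype.card κ : 𝕜) • 1 := by
    rw [conjTranspose_submatrix, ← submatrix_mul _ _ _ _ _ bijective_id, hH]
    ext i i'
    simp [one_apply]
  have hΨ_equiangular : ∀ j j', j ≠ j' → ‖(Ψᴴ * Ψ) j j'‖ = γ := by
    intro j j' hjj'
    have h := congrFun₂ (conjTranspose_mul_self_submatrix_sum H e) j j'
    rw [conjTranspose_mul_self_eq_smul_one hn hH, smul_apply, one_apply_ne hjj', smul_zero,
      add_apply] at h
    rw [eq_neg_of_add_eq_zero_right h, norm_neg]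
    exact hγ j j' hjj'
  exact hcard ▸ card_le_of_flat_etf (fun i j => hflat _ _) hΨ_tight hΨ_equiangular (hcard ▸ hm)

end

end Matrix

theorem Nat.two_mul_choose_two (d : ℕ) : 2 * d.choose 2 = d ^ 2 - d := by
  rw [Nat.choose_two_right, Nat.two_mul_div_two_of_even (Nat.even_mul_pred_self d),
    Nat.mul_sub_one, sq]

theorem add_sqrt_add_one_le {d n : ℕ} (hdn : d + 1 ≤ n) (h : n ≤ 2 * (n - d).choose 2 + 1) :
    (d : ℝ) + √d + 1 ≤ n := by
  have he : ((n - d : ℕ) : ℝ) = n - d := by push_cast [show d ≤ n by omega]; ring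
  have h' : (n : ℝ) ≤ 2 * ((n - d : ℕ).choose 2 : ℝ) + 1 := by exact_mod_cast h
  rw [Nat.cast_choose_two, he] at h'
  have hsqrt : √d ≤ n - d - 1 := by
    rw [Real.sqrt_le_left (by linarith [show (d : ℝ) + 1 ≤ n by exact_mod_cast hdn])]
    nlinarith
  linarith

theorem add_sqrt_two_mul_add_le {d n : ℕ} (hdn : d + 2 ≤ n) (h : n ≤ (n - d).choose 2 + 1) :
    (d : ℝ) + √(2 * d + 1 / 4) + 3 / 2 ≤ n := by
  have he : ((n - d : ℕ) : ℝ) = n - d := by push_cast [show d ≤ n by omega]; ring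
  have h' : (n : ℝ) ≤ ((n - d : ℕ).choose 2 : ℝ) + 1 := by exact_mod_cast h
  rw [Nat.cast_choose_two, he] at h'
  have hsqrt : √(2 * d + 1 / 4) ≤ n - d - 3 / 2 := by
    rw [Real.sqrt_le_left (by linarith [show (d : ℝ) + 2 ≤ n by exact_mod_cast hdn])]
    nlinarith
  linarith

/-- **Gerzon-type bounds for flat and Hadamard ETFs.**  If `{φ_j}` is a flat ETF for `F^d`
with `1 < d < n − 1`, then `n ≤ d² − d + 1` when `F = ℂ` and `n ≤ d(d−1)/2 + 1` when
`F = ℝ`.  If moreover the ETF is (complex) Hadamard, then also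
`n ≤ (n−d)² − (n−d) + 1`, i.e. `d + √d + 1 ≤ n` (complex case), and
`n ≤ (n−d)(n−d−1)/2 + 1`, i.e. `d + √(2d + 1/4) + 3/2 ≤ n` (real case). -/
theorem flat_etf_bounds :
    (∀ (d n : ℕ), 1 < d → d < n - 1 →
      ∀ Φ : Matrix (Fin d) (Fin n) ℂ,
        (∀ i j, ‖Φ i j‖ = 1) →
        (∃ α : ℝ, 0 < α ∧ Φ * Φ.conjTranspose = (α : ℂ) • 1) →
        (∃ γ : ℝ, ∀ j j', j ≠ j' → ‖∑ i, (starRingEnd ℂ) (Φ i j) * Φ i j'‖ = γ) →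
        n ≤ d ^ 2 - d + 1) ∧
    (∀ (d n : ℕ), 1 < d → d < n - 1 →
      ∀ Φ : Matrix (Fin d) (Fin n) ℝ,
        (∀ i j, Φ i j = 1 ∨ Φ i j = -1) →
        (∃ α : ℝ, 0 < α ∧ Φ * Φ.transpose = α • 1) →
        (∃ γ : ℝ, ∀ j j', j ≠ j' → |∑ i, Φ i j * Φ i j'| = γ) →
        n ≤ d * (d - 1) / 2 + 1) ∧
    (∀ (d n : ℕ), 1 < d → d < n - 1 →
      ∀ Φ : Matrix (Fin d) (Fin n) ℂ,
        (∀ i j, ‖Φ i j‖ = 1) →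
        (∃ α : ℝ, 0 < α ∧ Φ * Φ.conjTranspose = (α : ℂ) • 1) →
        (∃ γ : ℝ, ∀ j j', j ≠ j' → ‖∑ i, (starRingEnd ℂ) (Φ i j) * Φ i j'‖ = γ) →
        (∃ (H : Matrix (Fin n) (Fin n) ℂ) (f : Fin d → Fin n),
          (∀ i j, ‖H i j‖ = 1) ∧ H * H.conjTranspose = (n : ℂ) • 1 ∧
          Function.Injective f ∧ (∀ i j, Φ i j = H (f i) j)) →
        n ≤ (n - d) ^ 2 - (n - d) + 1 ∧ (d : ℝ) + Real.sqrt d + 1 ≤ n) ∧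
    (∀ (d n : ℕ), 1 < d → d < n - 1 →
      ∀ Φ : Matrix (Fin d) (Fin n) ℝ,
        (∀ i j, Φ i j = 1 ∨ Φ i j = -1) →
        (∃ α : ℝ, 0 < α ∧ Φ * Φ.transpose = α • 1) →
        (∃ γ : ℝ, ∀ j j', j ≠ j' → |∑ i, Φ i j * Φ i j'| = γ) →
        (∃ (H : Matrix (Fin n) (Fin n) ℝ) (f : Fin d → Fin n),
          (∀ i j, H i j = 1 ∨ H i j = -1) ∧ H * H.transpose = (n : ℝ) • 1 ∧
          Function.Injective f ∧ (∀ i j, Φ i j = H (f i) j)) →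
        n ≤ (n - d) * (n - d - 1) / 2 + 1 ∧
          (d : ℝ) + Real.sqrt (2 * d + 1 / 4) + 3 / 2 ≤ n) := by
  have norm_eq_one_of_sign {x : ℝ} (hx : x = 1 ∨ x = -1) : ‖x‖ = 1 := by
    rcases hx with rfl | rfl <;> simp
  refine ⟨?_, ?_, ?_, ?_⟩
  · rintro d n hd - Φ hflat ⟨α, -, hα⟩ ⟨γ, hγ⟩
    have h := card_le_of_flat_etf hflat hα hγ (by simpa using hd)
    simpa [Complex.finrank_real_complex, Nat.two_mul_choose_two] using h
  · rintro d n hd - Φ hsign ⟨α, -, hα⟩ ⟨γ, hγ⟩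
    have h := card_le_of_flat_etf (fun i j => norm_eq_one_of_sign (hsign i j))
      (by simpa using hα) hγ (by simpa using hd)
    simpa [Nat.choose_two_right] using h
  · rintro d n hd hn Φ - - ⟨γ, hγ⟩ ⟨H, f, hflat, hH, hf, hΦH⟩
    obtain rfl : Φ = H.submatrix f id := Matrix.ext hΦH
    have h := card_le_of_hadamard_etf hflat (by simpa using hH) hf hγ
      (by rw [Fintype.card_fin, Fintype.card_fin]; omega)
    simp only [Complex.finrank_real_complex, Fintype.card_fin] at h
    exact ⟨Nat.two_mul_choose_two (n - d) ▸ h, add_sqrt_add_one_le (by omega) h⟩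
  · rintro d n hd hn Φ - - ⟨γ, hγ⟩ ⟨H, f, hsign, hH, hf, hΦH⟩
    obtain rfl : Φ = H.submatrix f id := Matrix.ext hΦH
    have h := card_le_of_hadamard_etf (fun i j => norm_eq_one_of_sign (hsign i j))
      (by simpa using hH) hf hγ (by rw [Fintype.card_fin, Fintype.card_fin]; omega)
    simp only [finrank_self, one_mul, Fintype.card_fin] at h
    exact ⟨Nat.choose_two_right (n - d) ▸ h, add_sqrt_two_mul_add_le (by omega) h⟩
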